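/- arXiv:1509.06398 — 2 statements merged into one kernel-verified Lean document; each statement's English description precedes it below -/
import Mathlib

section
/- Let l ≥ 1, let x₁, …, x_{l+1} be points of ℝ^l in general position, and let σ : ℝ^l → ℝ^{l+1} be given by σ(y) = (‖y − x₁‖, …, ‖y − x_{l+1}‖). Then for every subset B ⊆ ℝ^l, the Hausdorff dimension of B is at most the Hausdorff dimension of σ(B). (Equivalently: the compositional inverse τ : σ(ℝ^l) → ℝ^l of σ does not raise Hausdorff dimension, i.e., for every A ⊆ σ(ℝ^l), the Hausdorff dimension of τ(A) is at most the Hausdorff dimension of A.) -/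
/-!
Subtracting squared distances linearizes `σ`: `‖y - x j‖² - ‖y - x i‖²` equals `2⟪x i - x j, y⟫`
up to a constant. Hence a smooth (polynomial) map sends `σ y` to `L y`, where
`L y = (⟪x i - x j, y⟫)ᵢ`. Since the points affinely span the space, `L` is an injective linear
map, so it is antilipschitz and does not lower Hausdorff dimension, while a `C¹` map does not
raise it.
-/

open Set

section

variable {E : Type*} [NormedAddCommGroup E] {ι : Type*}

noncomputable def distMap (x : ι → E) (y : E) : EuclideanSpace ℝ ι :=
  WithLp.toLp 2 fun i => ‖y - x i‖

@[simp]
theorem distMap_apply (x : ι → E) (y : E) (i : ι) : distMap x y i = ‖y - x i‖ :=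
  rfl

variable [InnerProductSpace ℝ E]

theorem two_mul_inner_sub_eq_norm_sub_sq (a b y : E) :
    2 * inner ℝ (a - b) y = ‖y - b‖ ^ 2 - ‖y - a‖ ^ 2 - ‖b‖ ^ 2 + ‖a‖ ^ 2 := by
  rw [inner_sub_left]
  simp only [norm_sub_sq_real, real_inner_comm y]
  ring

theorem eq_zero_of_forall_inner_sub_eq_zero {x : ι → E} (hx : vectorSpan ℝ (range x) = ⊤)
    (j : ι) {y : E} (hy : ∀ i, inner ℝ (x i - x j) y = 0) : y = 0 := by
  have hspan : Submodule.span ℝ (range fun i => x i -ᵥ x j) ≤ (ℝ ∙ y)ᗮ :=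
    Submodule.span_le.2 <| range_subset_iff.2 fun i =>
      Submodule.mem_orthogonal_singleton_iff_inner_left.2 (hy i)
  rw [← vectorSpan_range_eq_span_range_vsub_right, hx, top_le_iff] at hspan
  have hyy : y ∈ (ℝ ∙ y)ᗮ := hspan ▸ Submodule.mem_top
  exact inner_self_eq_zero.1 (Submodule.mem_orthogonal_singleton_iff_inner_left.1 hyy)

noncomputable def innerSubMap (x : ι → E) (j : ι) : E →ₗ[ℝ] EuclideanSpace ℝ ι :=
  (WithLp.linearEquiv 2 ℝ (ι → ℝ)).symm.toLinearMap ∘ₗ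
    LinearMap.pi fun i => innerₗ E (x i - x j)

@[simp]
theorem innerSubMap_apply (x : ι → E) (j : ι) (y : E) (i : ι) :
    innerSubMap x j y i = inner ℝ (x i - x j) y :=
  rfl

theorem innerSubMap_injective {x : ι → E} (hx : vectorSpan ℝ (range x) = ⊤) (j : ι) :
    Function.Injective (innerSubMap x j) := by
  rw [← LinearMap.ker_eq_bot, LinearMap.ker_eq_bot']
  exact fun y hy => eq_zero_of_forall_inner_sub_eq_zero hx j fun i => by
    simpa using congrArg (· i) hy

theorem exists_contDiff_comp_distMap_eq_innerSubMap [Fintype ι] (x : ι → E) (j : ι) :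
    ∃ g : EuclideanSpace ℝ ι → EuclideanSpace ℝ ι, ContDiff ℝ 1 g ∧
      ∀ y, g (distMap x y) = innerSubMap x j y := by
  refine ⟨fun s => WithLp.toLp 2 fun i => (s j ^ 2 - s i ^ 2 - ‖x j‖ ^ 2 + ‖x i‖ ^ 2) / 2,
    ?_, fun y => ?_⟩
  · fun_prop
  · ext i
    simp only [distMap_apply, innerSubMap_apply]
    linarith [two_mul_inner_sub_eq_norm_sub_sq (x i) (x j) y]

end

theorem dimH_le_dimH_image_of_contDiff_comp_eq {X E F : Type*} [EMetricSpace X]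
    [NormedAddCommGroup E] [NormedSpace ℝ E] [FiniteDimensional ℝ E]
    [NormedAddCommGroup F] [NormedSpace ℝ F] {f : X → E} {g : E → F} {h : X → F} {K : NNReal}
    (hg : ContDiff ℝ 1 g) (hh : AntilipschitzWith K h) (hgf : ∀ y, g (f y) = h y) (B : Set X) :
    dimH B ≤ dimH (f '' B) :=
  calc dimH B ≤ dimH (h '' B) := hh.le_dimH_image B
    _ = dimH (g '' (f '' B)) := by rw [image_image]; simp only [hgf]
    _ ≤ dimH (f '' B) := hg.contDiffOn.dimH_image_le convex_univ (subset_univ _)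

theorem dimH_le_dimH_image_distMap {E ι : Type*} [NormedAddCommGroup E] [InnerProductSpace ℝ E]
    [FiniteDimensional ℝ E] [Fintype ι] {x : ι → E} (hx : affineSpan ℝ (range x) = ⊤)
    (B : Set E) : dimH B ≤ dimH (distMap x '' B) := by
  obtain ⟨_, j, rfl⟩ := AffineSubspace.nonempty_of_affineSpan_eq_top ℝ E E hx
  obtain ⟨g, hg, hgf⟩ := exists_contDiff_comp_distMap_eq_innerSubMap x j
  obtain ⟨K, -, hK⟩ := (innerSubMap x j).injective_iff_antilipschitz.1
    (innerSubMap_injective (by rw [← direction_affineSpan, hx, AffineSubspace.direction_top]) j)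
  exact dimH_le_dimH_image_of_contDiff_comp_eq hg hK hgf B

theorem dimH_le_dimH_image_dist_map_general
    (l : ℕ) (x : Fin (l + 1) → EuclideanSpace ℝ (Fin l))
    (hx : AffineIndependent ℝ x)
    (σ : EuclideanSpace ℝ (Fin l) → EuclideanSpace ℝ (Fin (l + 1)))
    (hσ : ∀ y, σ y = fun i => ‖y - x i‖)
    (B : Set (EuclideanSpace ℝ (Fin l))) :
    dimH B ≤ dimH (σ '' B) := by
  have hspan : affineSpan ℝ (range x) = ⊤ :=
    hx.affineSpan_eq_top_iff_card_eq_finrank_add_one.2 (by simp)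
  obtain rfl : σ = distMap x := funext fun y => by ext i; simp [hσ]
  exact dimH_le_dimH_image_distMap hspan B

/-- Let `x₁, …, x_{l+1}` be points of `ℝ^l` in general position and let
`σ : ℝ^l → ℝ^{l+1}` be given by `σ(y) = (‖y − x₁‖, …, ‖y − x_{l+1}‖)`.
Then for every `B ⊆ ℝ^l`, the Hausdorff dimension of `B` is at most that of `σ(B)`
(equivalently, the inverse `τ` of `σ` on its image does not raise Hausdorff dimension). -/
theorem dimH_le_dimH_image_dist_map
    (l : ℕ) (hl : 1 ≤ l) (x : Fin (l + 1) → EuclideanSpace ℝ (Fin l))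
    (hx : AffineIndependent ℝ x)
    (σ : EuclideanSpace ℝ (Fin l) → EuclideanSpace ℝ (Fin (l + 1)))
    (hσ : ∀ y, σ y = fun i => ‖y - x i‖)
    (B : Set (EuclideanSpace ℝ (Fin l))) :
    dimH B ≤ dimH (σ '' B) :=
  dimH_le_dimH_image_dist_map_general l x hx σ hσ B
end

section
/- Let (X, d) be a metric space with positive Hausdorff dimension, let 0 < r < 1, and let k ≥ 1. Then there is no map ι : X → ℝ^k such that ‖ι(x) − ι(x')‖ = d(x, x')^r for all x, x' ∈ X. That is, the r-snowflake of (X, d) does not admit an isometric embedding into euclidean space. -/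
/-!
Suppose `ι` were such an embedding. Since `ι` is a uniform embedding, `X` is second countable, and
positive Hausdorff dimension forces `X` to be uncountable, hence not discrete: some `x` is an
accumulation point. Take `y, z ≠ x` with `d(z, x) = t · d(y, x)` and put `v = ι y - ι x`,
`w = ι z - ι x`. The law of cosines and `d(y, z) ≥ (1 - t) d(y, x)` give
`2⟪v, w⟫ ≤ (2t + t^{2r}) d(y, x)^{2r}`, while `‖v‖ ‖w‖ = t^r d(y, x)^{2r}`. As `r < 1`, the
term `t^r` dominates for small `t`, so the directions of `v` and `w` make an angle of at least
`60°`. A sequence `y_n → x` whose distances to `x` shrink fast enough thus yields infinitely many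
pairwise `1`-separated unit vectors, which is impossible in a finite-dimensional space.
-/

open Set Filter Topology
open scoped RealInnerProductSpace

lemma exists_nhdsNE_neBot_of_dimH_univ_pos {X : Type*} [EMetricSpace X]
    [SecondCountableTopology X] (h : 0 < dimH (univ : Set X)) : ∃ x : X, (𝓝[≠] x).NeBot := by
  by_contra! hX
  have : DiscreteTopology X := discreteTopology_iff_nhds_ne.2 hX
  have : Countable X := TopologicalSpace.separableSpace_iff_countable.1 inferInstance
  exact h.ne' (dimH_countable countable_univ)

lemma isUniformInducing_of_dist_eq_rpow {X Y : Type*} [PseudoMetricSpace X]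
    [PseudoMetricSpace Y] {f : X → Y} {r : ℝ} (hr : 0 < r)
    (hf : ∀ x x', dist (f x) (f x') = dist x x' ^ r) : IsUniformInducing f := by
  refine Metric.isUniformInducing_iff.2 ⟨Metric.uniformContinuous_iff.2 fun ε hε => ?_,
    fun δ hδ => ⟨δ ^ r, by positivity, fun {x x'} h => ?_⟩⟩
  · refine ⟨ε ^ r⁻¹, by positivity, fun {x x'} h => ?_⟩
    rw [hf, ← Real.rpow_inv_rpow hε.le hr.ne']
    exact Real.rpow_lt_rpow dist_nonneg h hr
  · rw [hf] at h
    exact (Real.rpow_lt_rpow_iff dist_nonneg hδ.le hr).1 h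

lemma exists_seq_dist_lt_mul_dist {X : Type*} [MetricSpace X] {x : X} [(𝓝[≠] x).NeBot]
    {η : ℝ} (hη : 0 < η) :
    ∃ y : ℕ → X, (∀ n, y n ≠ x) ∧ ∀ n m, n < m → dist (y m) x < η * dist (y n) x := by
  have hnext : ∀ z : {z : X // z ≠ x}, ∃ z' : {z : X // z ≠ x},
      dist (z' : X) x < min η 1 * dist (z : X) x := fun z => by
    have hε : 0 < min η 1 * dist (z : X) x := mul_pos (lt_min hη one_pos) (dist_pos.2 z.2)
    obtain ⟨z', hz'x, hz'⟩ :=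
      Filter.nonempty_of_mem (inter_mem_nhdsWithin {x}ᶜ (Metric.ball_mem_nhds x hε))
    exact ⟨⟨z', hz'x⟩, hz'⟩
  choose next hnext using hnext
  obtain ⟨z₀, hz₀⟩ := Filter.nonempty_of_mem (self_mem_nhdsWithin : {x}ᶜ ∈ 𝓝[≠] x)
  set s : ℕ → ℝ := fun n => dist (next^[n] ⟨z₀, hz₀⟩ : X) x
  have hs : ∀ n, s (n + 1) < min η 1 * s n := fun n => by
    simp only [s, Function.iterate_succ_apply']
    exact hnext _
  have hs_anti : StrictAnti s := strictAnti_nat_of_succ_lt fun n =>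
    (hs n).trans_le (mul_le_of_le_one_left dist_nonneg (min_le_right _ _))
  refine ⟨fun n => next^[n] ⟨z₀, hz₀⟩, fun n => (next^[n] _).2, fun n m hnm => ?_⟩
  calc s m ≤ s (n + 1) := hs_anti.antitone hnm
    _ < min η 1 * s n := hs n
    _ ≤ η * s n := mul_le_mul_of_nonneg_right (min_le_left _ _) dist_nonneg

lemma eventually_two_mul_add_rpow_le_rpow {r : ℝ} (hr0 : 0 < r) (hr1 : r < 1) :
    ∀ᶠ t in 𝓝[>] (0 : ℝ), 2 * t + t ^ (2 * r) ≤ t ^ r := by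
  have hlim : Tendsto (fun t : ℝ => 2 * t ^ (1 - r) + t ^ r) (𝓝[>] 0) (𝓝 0) := by
    have hcont : Continuous (fun t : ℝ => 2 * t ^ (1 - r) + t ^ r) := by
      fun_prop (disch := linarith)
    simpa [Real.zero_rpow (sub_pos.2 hr1).ne', Real.zero_rpow hr0.ne'] using
      hcont.continuousWithinAt.tendsto (x := 0) (s := Ioi 0)
  filter_upwards [hlim.eventually (gt_mem_nhds one_pos), self_mem_nhdsWithin] with t ht htpos
  calc 2 * t + t ^ (2 * r) = t ^ r * (2 * t ^ (1 - r) + t ^ r) := by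
        rw [mul_add, mul_left_comm, ← Real.rpow_add htpos, ← Real.rpow_add htpos,
          add_sub_cancel, Real.rpow_one, two_mul r]
    _ ≤ t ^ r := mul_le_of_le_one_right (Real.rpow_nonneg (le_of_lt htpos) r) ht.le

lemma one_sub_two_mul_le_one_sub_rpow {t p : ℝ} (ht0 : 0 ≤ t) (ht1 : t ≤ 1) (hp0 : 0 ≤ p)
    (hp2 : p ≤ 2) : 1 - 2 * t ≤ (1 - t) ^ p :=
  calc 1 - 2 * t ≤ (1 - t) ^ (2 : ℝ) := by rw [Real.rpow_two]; nlinarith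
    _ ≤ (1 - t) ^ p := Real.rpow_le_rpow_of_exponent_ge' (by linarith) (by linarith) hp0 hp2

lemma one_le_dist_inv_norm_smul {E : Type*} [NormedAddCommGroup E] [InnerProductSpace ℝ E]
    {v w : E} (hv : v ≠ 0) (hw : w ≠ 0) (h : 2 * ⟪v, w⟫ ≤ ‖v‖ * ‖w‖) :
    1 ≤ dist (‖v‖⁻¹ • v) (‖w‖⁻¹ • w) := by
  have hvw : 2 * ⟪‖v‖⁻¹ • v, ‖w‖⁻¹ • w⟫ ≤ 1 := by
    rw [real_inner_smul_left, real_inner_smul_right]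
    calc 2 * (‖v‖⁻¹ * (‖w‖⁻¹ * ⟪v, w⟫)) = 2 * ⟪v, w⟫ / (‖v‖ * ‖w‖) := by ring
      _ ≤ 1 := (div_le_one (by positivity)).2 h
  have := norm_sub_sq_real (‖v‖⁻¹ • v) (‖w‖⁻¹ • w)
  rw [show ‖‖v‖⁻¹ • v‖ = 1 from norm_smul_inv_norm (𝕜 := ℝ) hv,
    show ‖‖w‖⁻¹ • w‖ = 1 from norm_smul_inv_norm (𝕜 := ℝ) hw] at this
  rw [dist_eq_norm]
  nlinarith [norm_nonneg (‖v‖⁻¹ • v - ‖w‖⁻¹ • w)]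

lemma IsCompact.exists_lt_dist_lt {α : Type*} [PseudoMetricSpace α] {s : Set α}
    (hs : IsCompact s) {u : ℕ → α} (hu : ∀ n, u n ∈ s) {ε : ℝ} (hε : 0 < ε) :
    ∃ m n, m < n ∧ dist (u m) (u n) < ε := by
  obtain ⟨_, -, φ, hφ, hlim⟩ := hs.tendsto_subseq hu
  obtain ⟨N, hN⟩ := Metric.cauchySeq_iff'.1 hlim.cauchySeq ε hε
  exact ⟨φ N, φ (N + 1), hφ N.lt_succ_self, by rw [dist_comm]; exact hN (N + 1) N.le_succ⟩

section Snowflake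

variable {X E : Type*} [MetricSpace X] [NormedAddCommGroup E] [InnerProductSpace ℝ E]
  {r : ℝ} {ι : X → E}

lemma two_inner_le_of_dist_eq_mul (hι : ∀ x x', ‖ι x - ι x'‖ = dist x x' ^ r) (hr0 : 0 ≤ r)
    (hr1 : r ≤ 1) {x y z : X} {t : ℝ} (ht0 : 0 ≤ t) (ht1 : t ≤ 1)
    (hz : dist z x = t * dist y x) :
    2 * ⟪ι y - ι x, ι z - ι x⟫ ≤ (2 * t + t ^ (2 * r)) * dist y x ^ (2 * r) := by
  set a := dist y x
  have rpow_sq : ∀ c : ℝ, 0 ≤ c → (c ^ r) ^ 2 = c ^ (2 * r) := fun c hc => by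
    rw [mul_comm, ← Real.rpow_mul_natCast hc, Nat.cast_ofNat]
  have hyz : (1 - t) * a ≤ dist y z := by linarith [dist_triangle y z x]
  have hvw : ((1 - t) * a) ^ r ≤ ‖(ι y - ι x) - (ι z - ι x)‖ := by
    rw [sub_sub_sub_cancel_right, hι]
    exact Real.rpow_le_rpow (mul_nonneg (by linarith) dist_nonneg) hyz hr0
  have hsq : (1 - 2 * t) * a ^ (2 * r) ≤ ‖(ι y - ι x) - (ι z - ι x)‖ ^ 2 := calc
    (1 - 2 * t) * a ^ (2 * r) ≤ (1 - t) ^ (2 * r) * a ^ (2 * r) :=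
      mul_le_mul_of_nonneg_right
        (one_sub_two_mul_le_one_sub_rpow ht0 ht1 (by linarith) (by linarith)) (by positivity)
    _ = (((1 - t) * a) ^ r) ^ 2 := by
      rw [rpow_sq _ (mul_nonneg (by linarith) dist_nonneg),
        Real.mul_rpow (by linarith) dist_nonneg]
    _ ≤ _ := pow_le_pow_left₀ (by positivity) hvw 2
  have hlaw := norm_sub_sq_real (ι y - ι x) (ι z - ι x)
  rw [hι, hι, hz, rpow_sq _ dist_nonneg, rpow_sq _ (mul_nonneg ht0 dist_nonneg),
    Real.mul_rpow ht0 dist_nonneg] at hlaw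
  nlinarith

lemma one_le_dist_inv_norm_smul_of_dist_eq_mul (hι : ∀ x x', ‖ι x - ι x'‖ = dist x x' ^ r)
    (hr0 : 0 < r) (hr1 : r ≤ 1) {x y z : X} (hzx : z ≠ x) {t : ℝ} (ht1 : t ≤ 1)
    (hz : dist z x = t * dist y x) (ht : 2 * t + t ^ (2 * r) ≤ t ^ r) :
    1 ≤ dist (‖ι y - ι x‖⁻¹ • (ι y - ι x)) (‖ι z - ι x‖⁻¹ • (ι z - ι x)) := by
  have hzx' : 0 < t * dist y x := hz ▸ dist_pos.2 hzx
  have ht0 : 0 < t := pos_of_mul_pos_left hzx' dist_nonneg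
  have ha : 0 < dist y x := pos_of_mul_pos_right hzx' ht0.le
  have hv : ‖ι y - ι x‖ = dist y x ^ r := hι y x
  have hw : ‖ι z - ι x‖ = t ^ r * dist y x ^ r := by rw [hι, hz, Real.mul_rpow ht0.le ha.le]
  refine one_le_dist_inv_norm_smul (norm_pos_iff.1 (hv ▸ by positivity))
    (norm_pos_iff.1 (hw ▸ by positivity)) ?_
  calc 2 * ⟪ι y - ι x, ι z - ι x⟫ ≤ (2 * t + t ^ (2 * r)) * dist y x ^ (2 * r) :=
        two_inner_le_of_dist_eq_mul hι hr0.le hr1 ht0.le ht1 hz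
    _ ≤ t ^ r * dist y x ^ (2 * r) := mul_le_mul_of_nonneg_right ht (by positivity)
    _ = ‖ι y - ι x‖ * ‖ι z - ι x‖ := by rw [hv, hw, two_mul r, Real.rpow_add ha]; ring

theorem not_forall_norm_sub_eq_rpow_of_dimH_pos [ProperSpace E] (hX : 0 < dimH (univ : Set X))
    (hr0 : 0 < r) (hr1 : r < 1) : ¬ ∀ x x', ‖ι x - ι x'‖ = dist x x' ^ r := by
  intro hι
  have hιu : IsUniformInducing ι :=
    isUniformInducing_of_dist_eq_rpow hr0 fun x x' => by rw [dist_eq_norm, hι]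
  have : SecondCountableTopology X := hιu.isInducing.secondCountableTopology
  obtain ⟨x, hx⟩ := exists_nhdsNE_neBot_of_dimH_univ_pos hX
  obtain ⟨η, hη0, hη⟩ := mem_nhdsGT_iff_exists_Ioo_subset.1
    ((eventually_two_mul_add_rpow_le_rpow hr0 hr1).and
      (eventually_nhdsWithin_of_eventually_nhds (eventually_le_nhds one_pos)))
  obtain ⟨y, hyx, hy⟩ := exists_seq_dist_lt_mul_dist (x := x) hη0
  set u : ℕ → E := fun n => ‖ι (y n) - ι x‖⁻¹ • (ι (y n) - ι x)
  have hu : ∀ n, u n ∈ Metric.closedBall 0 1 := fun n => by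
    rw [mem_closedBall_zero_iff, norm_smul, norm_inv, norm_norm]
    exact inv_mul_le_one_of_le₀ le_rfl (norm_nonneg _)
  obtain ⟨n, m, hnm, hlt⟩ := (isCompact_closedBall (0 : E) 1).exists_lt_dist_lt hu one_pos
  have hyn : 0 < dist (y n) x := dist_pos.2 (hyx n)
  obtain ⟨ht, ht1⟩ := hη ⟨div_pos (dist_pos.2 (hyx m)) hyn, (div_lt_iff₀ hyn).2 (hy n m hnm)⟩
  exact hlt.not_ge (one_le_dist_inv_norm_smul_of_dist_eq_mul hι hr0 hr1.le (hyx m) ht1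
    (div_mul_cancel₀ _ hyn.ne').symm ht)

end Snowflake

theorem no_isometric_embedding_of_snowflake_general {X : Type*} [MetricSpace X]
    (hX : 0 < dimH (Set.univ : Set X))
    (r : ℝ) (hr0 : 0 < r) (hr1 : r < 1)
    (k : ℕ) :
    ¬ ∃ ι : X → EuclideanSpace ℝ (Fin k),
        ∀ x x' : X, ‖ι x - ι x'‖ = dist x x' ^ r :=
  fun ⟨_, hι⟩ => not_forall_norm_sub_eq_rpow_of_dimH_pos hX hr0 hr1 hι

/-- If `(X, d)` has positive Hausdorff dimension and `0 < r < 1`, then the `r`-snowflake of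
`(X, d)` admits no isometric embedding into euclidean space `ℝ^k`: there is no map
`ι : X → ℝ^k` with `‖ι x − ι x'‖ = d(x, x')^r` for all `x, x'`. -/
theorem no_isometric_embedding_of_snowflake {X : Type*} [MetricSpace X]
    (hX : 0 < dimH (Set.univ : Set X))
    (r : ℝ) (hr0 : 0 < r) (hr1 : r < 1)
    (k : ℕ) (hk : 1 ≤ k) :
    ¬ ∃ ι : X → EuclideanSpace ℝ (Fin k),
        ∀ x x' : X, ‖ι x - ι x'‖ = dist x x' ^ r :=
  no_isometric_embedding_of_snowflake_general hX r hr0 hr1 k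
end
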